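/- For any subnormalized bipartite state ρ_{AB}, the conditional min-entropy satisfies H_min(A|B)_ρ ≥ H_min(AB)_ρ − H₀(B)_ρ, where H_min(AB)_ρ = −log‖ρ_{AB}‖_∞ and H₀(B)_ρ = log rank(ρ_B). -/

import Mathlib

open scoped Classical Kronecker ComplexOrder

noncomputable section

namespace QIT

variable {ι κ γ : Type*} [Fintype ι] [DecidableEq ι] [Fintype κ] [DecidableEq κ]
  [Fintype γ] [DecidableEq γ]

/-- The old Mathlib `Matrix.PosSemidef.sqrt` (removed), spelled out. -/
def psdSqrt {A : Matrix ι ι ℂ} (hA : A.PosSemidef) : Matrix ι ι ℂ :=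
  hA.1.eigenvectorUnitary * Matrix.diagonal (((↑) : ℝ → ℂ) ∘ Real.sqrt ∘ hA.1.eigenvalues) *
    (star hA.1.eigenvectorUnitary : Matrix ι ι ℂ)

/-- Trace norm `‖A‖₁ = tr √(AᴴA)`. -/
def traceNorm (A : Matrix ι ι ℂ) : ℝ :=
  (psdSqrt (Matrix.posSemidef_conjTranspose_mul_self A)).trace.re

/-- Matrix square root (of a PSD matrix; junk value `0` otherwise). -/
def msqrt (A : Matrix ι ι ℂ) : Matrix ι ι ℂ :=
  if h : A.PosSemidef then psdSqrt h else 0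

/-- Fidelity `F(ρ,σ) = ‖√ρ√σ‖₁`. -/
def fidelity (ρ σ : Matrix ι ι ℂ) : ℝ := traceNorm (msqrt ρ * msqrt σ)

/-- Generalized fidelity. -/
def genFid (ρ σ : Matrix ι ι ℂ) : ℝ :=
  fidelity ρ σ + Real.sqrt ((1 - ρ.trace.re) * (1 - σ.trace.re))

/-- Purified distance. -/
def purifiedDist (ρ σ : Matrix ι ι ℂ) : ℝ := Real.sqrt (1 - genFid ρ σ ^ 2)

def IsSubnormalized (ρ : Matrix ι ι ℂ) : Prop := ρ.PosSemidef ∧ ρ.trace.re ≤ 1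

def IsDensity (ρ : Matrix ι ι ℂ) : Prop := ρ.PosSemidef ∧ ρ.trace = 1

/-- Max-relative entropy `D_max(ρ‖σ) = inf {λ : 2^λ σ ≥ ρ}`. -/
def Dmax (ρ σ : Matrix ι ι ℂ) : ℝ :=
  sInf {l : ℝ | ((((2:ℝ) ^ l : ℝ) : ℂ) • σ - ρ).PosSemidef}

/-- Partial trace over the first factor. -/
def ptrace₁ (ρ : Matrix (ι × κ) (ι × κ) ℂ) : Matrix κ κ ℂ :=
  Matrix.of fun (b b' : κ) => ∑ a, ρ (a, b) (a, b')

/-- Partial trace over the second factor. -/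
def ptrace₂ (ρ : Matrix (ι × κ) (ι × κ) ℂ) : Matrix ι ι ℂ :=
  Matrix.of fun (a a' : ι) => ∑ b, ρ (a, b) (a', b)

/-- Max-information `I_max(A:B)_ρ = inf_{σ_B} D_max(ρ_{AB}‖ρ_A ⊗ σ_B)`. -/
def Imax (ρ : Matrix (ι × κ) (ι × κ) ℂ) : ℝ :=
  sInf {x : ℝ | ∃ σ : Matrix κ κ ℂ, IsDensity σ ∧ x = Dmax ρ (ptrace₂ ρ ⊗ₖ σ)}

/-- Conditional min-entropy `H_min(A|B)_ρ = −inf_{σ_B} D_max(ρ_{AB}‖Id_A ⊗ σ_B)`. -/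
def HminCond (ρ : Matrix (ι × κ) (ι × κ) ℂ) : ℝ :=
  - sInf {x : ℝ | ∃ σ : Matrix κ κ ℂ, IsDensity σ ∧ x = Dmax ρ ((1 : Matrix ι ι ℂ) ⊗ₖ σ)}

/-- Largest eigenvalue (operator norm for PSD matrices). -/
def maxEig (ρ : Matrix ι ι ℂ) : ℝ :=
  if h : ρ.IsHermitian then ⨆ i, h.eigenvalues i else 0

/-- Zero-Rényi entropy `H₀ = log rank`. -/
def H0 (ρ : Matrix ι ι ℂ) : ℝ := Real.logb 2 ρ.rank

/-- Min-entropy `H_min = −log ‖ρ‖_∞`. -/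
def Hmin (ρ : Matrix ι ι ℂ) : ℝ := - Real.logb 2 (maxEig ρ)

/-- Max-entropy `H_max = 2 log tr √ρ`. -/
def Hmax (ρ : Matrix ι ι ℂ) : ℝ := 2 * Real.logb 2 (msqrt ρ).trace.re

def smoothH0 (ε : ℝ) (ρ : Matrix ι ι ℂ) : ℝ :=
  sInf {x : ℝ | ∃ σ : Matrix ι ι ℂ, IsSubnormalized σ ∧ purifiedDist σ ρ ≤ ε ∧ x = H0 σ}

def smoothHmax (ε : ℝ) (ρ : Matrix ι ι ℂ) : ℝ :=
  sInf {x : ℝ | ∃ σ : Matrix ι ι ℂ, IsSubnormalized σ ∧ purifiedDist σ ρ ≤ ε ∧ x = Hmax σ}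

def smoothImax (ε : ℝ) (ρ : Matrix (ι × κ) (ι × κ) ℂ) : ℝ :=
  sInf {x : ℝ | ∃ σ : Matrix (ι × κ) (ι × κ) ℂ,
    IsSubnormalized σ ∧ purifiedDist σ ρ ≤ ε ∧ x = Imax σ}

/-!
Let `P` be the projection onto the support of `ρ_B` and `m = ‖ρ_AB‖_∞`. Since
`tr(ρ_AB (1 ⊗ (1 - P))) = tr(ρ_B (1 - P)) = 0` and `ρ_AB ≥ 0`, the state `ρ_AB` is supported on
`1 ⊗ P`, so compressing `ρ_AB ≤ m · 1` by `1 ⊗ P` gives `ρ_AB ≤ m · (1 ⊗ P)`. With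
`σ_B = P / rank ρ_B` this reads `ρ_AB ≤ 2 ^ (log m + log rank ρ_B) · (1 ⊗ σ_B)`, i.e.
`D_max(ρ_AB ‖ 1 ⊗ σ_B) ≤ -H_min(AB) + H₀(B)`.
-/

open scoped MatrixOrder
open Matrix

section SupportProjection

variable {n : Type*} [Fintype n] [DecidableEq n] {B : Matrix n n ℂ}

def supportProj (B : Matrix n n ℂ) : Matrix n n ℂ :=
  cfc (fun x : ℝ => if x = 0 then 0 else 1) B

lemma isStarProjection_supportProj (B : Matrix n n ℂ) : IsStarProjection (supportProj B) := by
  refine ⟨?_, cfc_predicate _ B⟩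
  rw [IsIdempotentElem, supportProj, ← cfc_mul _ _ B (B.finite_real_spectrum.continuousOn _)
    (B.finite_real_spectrum.continuousOn _)]
  congr! 2 with x
  split_ifs <;> norm_num

lemma mul_supportProj (hB : B.IsHermitian) : B * supportProj B = B := by
  have hid := cfc_id' (R := ℝ) (a := B) hB.isSelfAdjoint
  calc B * supportProj B = cfc (fun x : ℝ => x * if x = 0 then 0 else 1) B := by
        rw [supportProj, cfc_mul _ _ B (B.finite_real_spectrum.continuousOn _)
          (B.finite_real_spectrum.continuousOn _), hid]
    _ = B := by
        conv_rhs => rw [← hid]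
        congr! 2 with x
        split_ifs with h <;> simp [h]

lemma _root_.Matrix.IsHermitian.trace_cfc (hB : B.IsHermitian) (f : ℝ → ℝ) :
    (cfc f B).trace = ∑ i, (f (hB.eigenvalues i) : ℂ) := by
  rw [hB.cfc_eq, IsHermitian.cfc, Unitary.conjStarAlgAut_apply, trace_mul_cycle,
    Unitary.coe_star_mul_self, one_mul, trace_diagonal]
  rfl

lemma trace_supportProj (hB : B.IsHermitian) : (supportProj B).trace = B.rank := by
  rw [supportProj, hB.trace_cfc, hB.rank_eq_card_non_zero_eigs, Fintype.card_subtype,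
    Finset.card_filter]
  push_cast
  refine Finset.sum_congr rfl fun i _ => ?_
  split_ifs <;> simp_all

lemma _root_.Matrix.IsHermitian.rank_pos (hB : B.IsHermitian) (h0 : B ≠ 0) : 0 < B.rank := by
  obtain ⟨i, hi⟩ : ∃ i, hB.eigenvalues i ≠ 0 := by
    by_contra! h
    exact h0 (hB.eigenvalues_eq_zero_iff.mp (funext h))
  rw [hB.rank_eq_card_non_zero_eigs]
  exact Fintype.card_pos_iff.mpr ⟨⟨i, hi⟩⟩

lemma isDensity_smul_supportProj (hB : B.IsHermitian) (h0 : B ≠ 0) :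
    IsDensity ((((B.rank : ℝ)⁻¹ : ℝ) : ℂ) • supportProj B) := by
  have hr : (0 : ℝ) < B.rank := Nat.cast_pos.mpr (hB.rank_pos h0)
  refine ⟨(isStarProjection_supportProj B).nonneg.posSemidef.smul
    (Complex.zero_le_real.mpr (by positivity)), ?_⟩
  rw [trace_smul, trace_supportProj hB, smul_eq_mul, ← Complex.ofReal_natCast,
    ← Complex.ofReal_mul, inv_mul_cancel₀ hr.ne', Complex.ofReal_one]

end SupportProjection

section LoewnerOrder

variable {n : Type*} [Fintype n]

lemma _root_.IsStarProjection.one_kronecker {m : Type*} [Fintype m] [DecidableEq m] {R : Type*}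
    [CommRing R] [StarRing R] {P : Matrix n n R} (hP : IsStarProjection P) :
    IsStarProjection ((1 : Matrix m m R) ⊗ₖ P) := by
  refine ⟨?_, ?_⟩
  · rw [IsIdempotentElem, ← mul_kronecker_mul, Matrix.one_mul, hP.isIdempotentElem.eq]
  · rw [IsSelfAdjoint, star_eq_conjTranspose, conjTranspose_kronecker, conjTranspose_one,
      ← star_eq_conjTranspose, hP.isSelfAdjoint.star_eq]

lemma _root_.Matrix.PosSemidef.trace_re_pos {A : Matrix n n ℂ} (hA : A.PosSemidef) (h0 : A ≠ 0) :
    0 < A.trace.re :=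
  (Complex.pos_iff.mp (hA.trace_nonneg.lt_of_ne' ((hA.trace_eq_zero_iff).not.mpr h0))).1

lemma _root_.Matrix.PosSemidef.mul_eq_zero_of_trace_mul_eq_zero {A K : Matrix n n ℂ}
    (hA : A.PosSemidef) (hK : IsStarProjection K) (h : (A * K).trace = 0) : A * K = 0 := by
  obtain ⟨C, rfl⟩ := CStarAlgebra.nonneg_iff_eq_star_mul_self.mp hA.nonneg
  have hCK : C * K = 0 := by
    rw [← trace_conjTranspose_mul_self_eq_zero_iff, conjTranspose_mul, ← star_eq_conjTranspose K,
      hK.isSelfAdjoint.star_eq, trace_mul_cycle, Matrix.mul_assoc C K K, hK.isIdempotentElem.eq,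
      trace_mul_cycle, ← star_eq_conjTranspose, h]
  rw [Matrix.mul_assoc, hCK, Matrix.mul_zero]

lemma _root_.Matrix.le_smul_of_mul_eq_self [DecidableEq n] {A L : Matrix n n ℂ} (hA : A.IsHermitian)
    (hL : IsStarProjection L) (hAL : A * L = A) {c : ℂ} (h : A ≤ c • 1) : A ≤ c • L := by
  have hLA : L * A = A := by
    simpa only [star_mul, hA.isSelfAdjoint.star_eq, hL.isSelfAdjoint.star_eq]
      using congrArg star hAL
  have := star_left_conjugate_le_conjugate h L
  rwa [hL.isSelfAdjoint.star_eq, Matrix.mul_smul, Matrix.mul_one, Matrix.smul_mul,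
    hL.isIdempotentElem.eq, hLA, hAL] at this

end LoewnerOrder

section MaxEigenvalue

variable {n : Type*} [Fintype n] [DecidableEq n] {A : Matrix n n ℂ}

lemma eigenvalues_le_maxEig (hA : A.IsHermitian) (i : n) : hA.eigenvalues i ≤ maxEig A := by
  rw [maxEig, dif_pos hA]
  exact le_ciSup (Set.finite_range _).bddAbove i

lemma le_maxEig_smul_one (hA : A.IsHermitian) : A ≤ (maxEig A : ℂ) • 1 := by
  have := le_algebraMap_of_spectrum_le (r := maxEig A) (a := A) (fun x hx => by
    obtain ⟨i, rfl⟩ := hA.spectrum_real_eq_range_eigenvalues ▸ hx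
    exact eigenvalues_le_maxEig hA i) hA.isSelfAdjoint
  rwa [Algebra.algebraMap_eq_smul_one, ← Complex.coe_smul] at this

lemma maxEig_pos (hA : A.PosSemidef) (h0 : A ≠ 0) : 0 < maxEig A := by
  obtain ⟨i, hi⟩ : ∃ i, hA.1.eigenvalues i ≠ 0 := by
    by_contra! h
    exact h0 (hA.1.eigenvalues_eq_zero_iff.mp (funext h))
  exact ((hA.eigenvalues_nonneg i).lt_of_ne' hi).trans_le (eigenvalues_le_maxEig hA.1 i)

lemma maxEig_zero : maxEig (0 : Matrix n n ℂ) = 0 := by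
  rw [maxEig, dif_pos isHermitian_zero, isHermitian_zero.eigenvalues_eq_zero_iff.mpr rfl]
  exact Real.iSup_const_zero

end MaxEigenvalue

section PartialTrace

variable {m n : Type*} [Fintype m]

lemma trace_mul_one_kronecker [DecidableEq m] [Fintype n] (ρ : Matrix (m × n) (m × n) ℂ)
    (M : Matrix n n ℂ) : (ρ * ((1 : Matrix m m ℂ) ⊗ₖ M)).trace = (ptrace₁ ρ * M).trace := by
  simp [trace, mul_apply, ptrace₁, one_apply, Fintype.sum_prod_type, Finset.sum_mul]
  rw [Finset.sum_comm]
  exact Finset.sum_congr rfl fun _ _ => Finset.sum_comm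

lemma trace_ptrace₁ [DecidableEq m] [Fintype n] [DecidableEq n] (ρ : Matrix (m × n) (m × n) ℂ) :
    (ptrace₁ ρ).trace = ρ.trace := by
  simpa using (trace_mul_one_kronecker ρ 1).symm

lemma isHermitian_ptrace₁ {ρ : Matrix (m × n) (m × n) ℂ} (hρ : ρ.IsHermitian) :
    (ptrace₁ ρ).IsHermitian := by
  ext b b'
  simp only [conjTranspose_apply, ptrace₁, of_apply, star_sum]
  exact Finset.sum_congr rfl fun a _ => congr_fun (congr_fun hρ (a, b)) (a, b')

lemma mul_one_kronecker_supportProj_ptrace₁ [DecidableEq m] [Fintype n] [DecidableEq n]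
    {ρ : Matrix (m × n) (m × n) ℂ} (hρ : ρ.PosSemidef) :
    ρ * ((1 : Matrix m m ℂ) ⊗ₖ supportProj (ptrace₁ ρ)) = ρ := by
  set L := (1 : Matrix m m ℂ) ⊗ₖ supportProj (ptrace₁ ρ)
  have hL : IsStarProjection L := (isStarProjection_supportProj _).one_kronecker
  have htr : (ρ * (1 - L)).trace = 0 := by
    rw [Matrix.mul_sub, Matrix.mul_one, trace_sub, trace_mul_one_kronecker,
      mul_supportProj (isHermitian_ptrace₁ hρ.1), trace_ptrace₁, sub_self]
  have := hρ.mul_eq_zero_of_trace_mul_eq_zero hL.one_sub htr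
  rwa [Matrix.mul_sub, Matrix.mul_one, sub_eq_zero, eq_comm] at this

lemma le_maxEig_smul_one_kronecker_supportProj [DecidableEq m] [Fintype n] [DecidableEq n]
    {ρ : Matrix (m × n) (m × n) ℂ} (hρ : ρ.PosSemidef) :
    ρ ≤ (maxEig ρ : ℂ) • ((1 : Matrix m m ℂ) ⊗ₖ supportProj (ptrace₁ ρ)) :=
  le_smul_of_mul_eq_self hρ.1 (isStarProjection_supportProj _).one_kronecker
    (mul_one_kronecker_supportProj_ptrace₁ hρ) (le_maxEig_smul_one hρ.1)

end PartialTrace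

section ConditionalMinEntropy

variable {m n : Type*}

lemma Dmax_le {ρ σ : Matrix n n ℂ} {c l : ℝ}
    (hbdd : ∀ l', ρ ≤ ((2 ^ l' : ℝ) : ℂ) • σ → c ≤ l') (hl : ρ ≤ ((2 ^ l : ℝ) : ℂ) • σ) :
    Dmax ρ σ ≤ l :=
  csInf_le ⟨c, hbdd⟩ hl

lemma min_le_Dmax {ρ σ : Matrix n n ℂ} {c : ℝ}
    (hbdd : ∀ l', ρ ≤ ((2 ^ l' : ℝ) : ℂ) • σ → c ≤ l') : min c 0 ≤ Dmax ρ σ := by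
  have hD : Dmax ρ σ = sInf {l : ℝ | ρ ≤ ((2 ^ l : ℝ) : ℂ) • σ} := rfl
  rcases Set.eq_empty_or_nonempty {l : ℝ | ρ ≤ ((2 ^ l : ℝ) : ℂ) • σ} with he | hne
  · -- no exponent is feasible and `Dmax` takes the junk value `sInf ∅ = 0`
    rw [hD, he, Real.sInf_empty]
    exact min_le_right _ _
  · exact (min_le_left _ _).trans (hD ▸ le_csInf hne hbdd)

-- `-∞` on paper; in `ℝ` the infimum of the unbounded set `univ` is `0`.
lemma Dmax_zero_left {σ : Matrix n n ℂ} (hσ : σ.PosSemidef) : Dmax 0 σ = 0 := by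
  rw [Dmax, ← Real.sInf_univ]
  congr 1
  exact Set.eq_univ_of_forall fun l => by
    simpa using hσ.smul (Complex.zero_le_real.mpr (Real.rpow_nonneg zero_le_two l))

variable [Fintype m] [DecidableEq m] [Fintype n]

lemma logb_trace_div_card_le {ρ : Matrix (m × n) (m × n) ℂ} (hρ : 0 < ρ.trace.re)
    {σ : Matrix n n ℂ} (hσ : IsDensity σ) {l : ℝ}
    (hl : ρ ≤ ((2 ^ l : ℝ) : ℂ) • ((1 : Matrix m m ℂ) ⊗ₖ σ)) :
    Real.logb 2 (ρ.trace.re / Fintype.card m) ≤ l := by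
  have htr : ρ.trace.re ≤ 2 ^ l * Fintype.card m := by
    have := (Complex.nonneg_iff.mp hl.trace_nonneg).1
    rw [trace_sub, trace_smul, trace_kronecker, trace_one, hσ.2] at this
    simpa using this
  have hm : (0 : ℝ) < Fintype.card m := pos_of_mul_pos_right (hρ.trans_le htr) (by positivity)
  rw [Real.logb_le_iff_le_rpow one_lt_two (by positivity), div_le_iff₀ hm]
  exact htr

lemma hminCond_zero : HminCond (0 : Matrix (m × n) (m × n) ℂ) = 0 := by
  have hS : ∀ x ∈ {x : ℝ | ∃ σ : Matrix n n ℂ, IsDensity σ ∧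
      x = Dmax 0 ((1 : Matrix m m ℂ) ⊗ₖ σ)}, x = 0 := by
    rintro _ ⟨σ, hσ, rfl⟩
    exact Dmax_zero_left (PosSemidef.one.kronecker hσ.1)
  rw [HminCond, neg_eq_zero]
  exact le_antisymm (Real.sInf_nonpos fun x hx => (hS x hx).le)
    (Real.sInf_nonneg fun x hx => (hS x hx).ge)

lemma neg_le_hminCond {ρ : Matrix (m × n) (m × n) ℂ} (hρ : 0 < ρ.trace.re) {σ : Matrix n n ℂ}
    (hσ : IsDensity σ) {l : ℝ} (hl : ρ ≤ ((2 ^ l : ℝ) : ℂ) • ((1 : Matrix m m ℂ) ⊗ₖ σ)) :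
    -l ≤ HminCond ρ := by
  set c := Real.logb 2 (ρ.trace.re / Fintype.card m)
  have hbdd (τ : Matrix n n ℂ) (hτ : IsDensity τ) (l' : ℝ)
      (hl' : ρ ≤ ((2 ^ l' : ℝ) : ℂ) • ((1 : Matrix m m ℂ) ⊗ₖ τ)) : c ≤ l' :=
    logb_trace_div_card_le hρ hτ hl'
  rw [HminCond, neg_le_neg_iff]
  refine le_trans (csInf_le ⟨min c 0, ?_⟩ ⟨σ, hσ, rfl⟩) (Dmax_le (hbdd σ hσ) hl)
  rintro _ ⟨τ, hτ, rfl⟩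
  exact min_le_Dmax (hbdd τ hτ)

end ConditionalMinEntropy

/-- `H_min(A|B)_ρ ≥ H_min(AB)_ρ − H₀(B)_ρ`. -/
theorem hminCond_ge (ρ : Matrix (ι × κ) (ι × κ) ℂ) (h : IsSubnormalized ρ) :
    HminCond ρ ≥ Hmin ρ - H0 (ptrace₁ ρ) := by
  obtain rfl | hρ0 := eq_or_ne ρ 0
  · -- both sides are junk values equal to `0`
    have : ptrace₁ (0 : Matrix (ι × κ) (ι × κ) ℂ) = 0 := by ext; simp [ptrace₁]
    simp [hminCond_zero, Hmin, H0, maxEig_zero, this]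
  have hρ := h.1
  have htr : 0 < ρ.trace.re := hρ.trace_re_pos hρ0
  have hρB0 : ptrace₁ ρ ≠ 0 := fun h0 => by simp [← trace_ptrace₁, h0] at htr
  have hρB := isHermitian_ptrace₁ hρ.1
  set r : ℝ := ((ptrace₁ ρ).rank : ℝ)
  have hr : 0 < r := Nat.cast_pos.mpr (hρB.rank_pos hρB0)
  have hm : 0 < maxEig ρ := maxEig_pos hρ hρ0
  have hle : ρ ≤ ((2 ^ (Real.logb 2 (maxEig ρ) + Real.logb 2 r) : ℝ) : ℂ) •
      ((1 : Matrix ι ι ℂ) ⊗ₖ (((r⁻¹ : ℝ) : ℂ) • supportProj (ptrace₁ ρ))) := by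
    rw [Real.rpow_add two_pos, Real.rpow_logb two_pos one_lt_two.ne' hm,
      Real.rpow_logb two_pos one_lt_two.ne' hr, kronecker_smul, smul_smul, ← Complex.ofReal_mul,
      mul_inv_cancel_right₀ hr.ne']
    exact le_maxEig_smul_one_kronecker_supportProj hρ
  have := neg_le_hminCond htr (isDensity_smul_supportProj hρB hρB0) hle
  rw [Hmin, H0]
  linarith

end QIT
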